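/- arXiv:2603.28814 — 7 statements merged into one kernel-verified Lean document; each statement's English description precedes it below -/
import Mathlib

section
/- The map θ ↦ u·cos θ restricts to a bijection from the set {θ ∈ [0, π] : f(θ) = 0} onto the set {t ∈ [−u, u] : P(t) = 0}. -/
open Real

theorem stmt_6 (m p q : ℝ) (hm : m < 0)
    (u a b : ℝ) (P f : ℝ → ℝ)
    (hu : u = Real.sqrt (-m))
    (ha : a = 8 * p / (-m) ^ ((3 : ℝ) / 2))
    (hb : b = 8 * q / m ^ 2 - 1)
    (hP : ∀ t, P t = t ^ 4 + m * t ^ 2 + p * t + q)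
    (hf : ∀ θ, f θ = a * Real.cos θ + Real.cos (4 * θ) + b) :
    Set.BijOn (fun θ => u * Real.cos θ)
      {θ ∈ Set.Icc 0 π | f θ = 0} {t ∈ Set.Icc (-u) u | P t = 0} := by
  have hmn : (0:ℝ) < -m := by linarith
  have hu0 : 0 < u := by rw [hu]; exact Real.sqrt_pos.2 hmn
  have hu2 : u ^ 2 = -m := by rw [hu]; exact Real.sq_sqrt hmn.le
  have hmeq : m = -u ^ 2 := by linarith
  have h32 : (-m) ^ ((3 : ℝ) / 2) = u ^ 3 := by
    rw [show (3:ℝ)/2 = 1 + 1/2 by norm_num, Real.rpow_add hmn, Real.rpow_one,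
      ← Real.sqrt_eq_rpow, ← hu]
    nlinarith [hu2]
  have hcos4 : ∀ θ : ℝ, Real.cos (4 * θ) = 8 * Real.cos θ ^ 4 - 8 * Real.cos θ ^ 2 + 1 := by
    intro θ
    rw [show (4:ℝ) * θ = 2 * (2 * θ) by ring, Real.cos_two_mul, Real.cos_two_mul]
    ring
  have hune : u ≠ 0 := ne_of_gt hu0
  have key : ∀ θ : ℝ, f θ = 8 / u ^ 4 * P (u * Real.cos θ) := by
    intro θ
    rw [hf, hP, ha, hb, h32, hmeq, hcos4 θ]
    field_simp
    ring
  have hm4 : (0:ℝ) < u ^ 4 := by positivity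
  refine ⟨?_, ?_, ?_⟩
  · intro θ ⟨hθI, hθf⟩
    simp only [Set.mem_setOf_eq, Set.mem_Icc]
    refine ⟨⟨?_, ?_⟩, ?_⟩
    · nlinarith [Real.neg_one_le_cos θ]
    · nlinarith [Real.cos_le_one θ]
    · have h := key θ
      rw [hθf] at h
      have : P (u * Real.cos θ) = 0 := by
        field_simp at h; linarith
      exact this
  · intro θ₁ h₁ θ₂ h₂ heq
    exact Real.injOn_cos h₁.1 h₂.1 (mul_left_cancel₀ hune heq)
  · intro t ⟨htI, htP⟩
    obtain ⟨ht1, ht2⟩ := htI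
    have hd1 : -1 ≤ t / u := by rw [le_div_iff₀ hu0]; linarith
    have hd2 : t / u ≤ 1 := by rw [div_le_one hu0]; linarith
    refine ⟨Real.arccos (t / u), ⟨⟨Real.arccos_nonneg _, Real.arccos_le_pi _⟩, ?_⟩, ?_⟩
    · rw [key, Real.cos_arccos hd1 hd2, mul_div_cancel₀ _ hune, htP]
      ring
    · simp only
      rw [Real.cos_arccos hd1 hd2, mul_div_cancel₀ _ hune]
end

section
/- The function f has at most three critical points in the open interval (0, π), i.e., the set {θ ∈ (0, π) : f'(θ) = 0} has at most three elements. -/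
open Real Polynomial

theorem stmt_9 (a b : ℝ) (f : ℝ → ℝ)
    (hf : ∀ θ, f θ = a * Real.cos θ + Real.cos (4 * θ) + b) :
    {θ ∈ Set.Ioo 0 π | deriv f θ = 0}.encard ≤ 3 := by
  have hfe : f = fun θ => a * Real.cos θ + Real.cos (4 * θ) + b := funext hf
  have hderiv : ∀ θ : ℝ, deriv f θ = a * -Real.sin θ + -Real.sin (4 * θ) * (4 * 1) := by
    intro θ
    have h4 : HasDerivAt (fun x : ℝ => (4 : ℝ) * x) (4 * 1) θ :=
      (hasDerivAt_id θ).const_mul 4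
    have hc : HasDerivAt (fun x : ℝ => Real.cos (4 * x)) (-Real.sin (4 * θ) * (4 * 1)) θ :=
      (Real.hasDerivAt_cos (4 * θ)).comp θ h4
    have h1 : HasDerivAt (fun θ : ℝ => a * Real.cos θ + Real.cos (4 * θ) + b)
        (a * -Real.sin θ + -Real.sin (4 * θ) * (4 * 1)) θ :=
      (((Real.hasDerivAt_cos θ).const_mul a).add hc).add_const b
    rw [hfe]
    simpa using h1.deriv
  set p : Polynomial ℝ := C 32 * X ^ 3 - C 16 * X + C a with hp
  have hdeg : p.natDegree = 3 := by
    rw [hp]; compute_degree!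
  set S := {θ ∈ Set.Ioo 0 π | deriv f θ = 0} with hS
  have hsub : Real.cos '' S ⊆ {x | p.eval x = 0} := by
    rintro x ⟨θ, ⟨hθ, hd⟩, rfl⟩
    have hs : Real.sin θ ≠ 0 := ne_of_gt (Real.sin_pos_of_pos_of_lt_pi hθ.1 hθ.2)
    have h4 : Real.sin (4 * θ) = 4 * Real.sin θ * Real.cos θ * (2 * Real.cos θ ^ 2 - 1) := by
      have : (4 : ℝ) * θ = 2 * (2 * θ) := by ring
      rw [this, Real.sin_two_mul, Real.sin_two_mul, Real.cos_two_mul]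
      ring
    rw [hderiv θ, h4] at hd
    have hfac : Real.sin θ * (32 * Real.cos θ ^ 3 - 16 * Real.cos θ + a) = 0 := by
      nlinarith [hd]
    rcases mul_eq_zero.1 hfac with h | h
    · exact absurd h hs
    · simp only [Set.mem_setOf_eq, hp]
      simp [Polynomial.eval_add, Polynomial.eval_sub]
      linarith
  have hinj : Set.InjOn Real.cos S := by
    apply Real.injOn_cos.mono
    intro θ hθ
    exact Set.mem_Icc.2 ⟨le_of_lt hθ.1.1, le_of_lt hθ.1.2⟩
  have hpne : p ≠ 0 := by
    intro h
    rw [h] at hdeg; simp at hdeg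
  have hroots : {x : ℝ | p.eval x = 0}.encard ≤ 3 := by
    have heq : {x : ℝ | p.eval x = 0} = ↑p.roots.toFinset := by
      ext x
      simp [Multiset.mem_toFinset, Polynomial.mem_roots, hpne, Polynomial.IsRoot]
    rw [heq, Set.encard_coe_eq_coe_finsetCard]
    have h1 : p.roots.toFinset.card ≤ p.roots.card := p.roots.toFinset_card_le
    have h2 : p.roots.card ≤ p.natDegree := p.card_roots'
    have : p.roots.toFinset.card ≤ 3 := le_trans h1 (h2.trans_eq hdeg)
    exact_mod_cast Nat.cast_le.2 this
  calc S.encard = (Real.cos '' S).encard := (hinj.encard_image).symm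
    _ ≤ {x : ℝ | p.eval x = 0}.encard := Set.encard_le_encard hsub
    _ ≤ 3 := hroots
end

section
/- The set {θ ∈ [0, π] : f(θ) = 0} has at most four elements. -/
open Real Polynomial

theorem stmt_10 (a b : ℝ) (f : ℝ → ℝ)
    (hf : ∀ θ, f θ = a * Real.cos θ + Real.cos (4 * θ) + b) :
    {θ ∈ Set.Icc 0 π | f θ = 0}.encard ≤ 4 := by
  set p : ℝ[X] := C 8 * X ^ 4 + C (-8) * X ^ 2 + C a * X + C (1 + b) with hp
  have hdeg : p.natDegree = 4 := by
    unfold p; compute_degree!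
  have hpne : p ≠ 0 := by
    intro h
    have := hdeg
    rw [h] at this
    simp at this
  have key : ∀ θ : ℝ, f θ = 0 → p.IsRoot (Real.cos θ) := by
    intro θ hθ
    have hcos4 : Real.cos (4 * θ) = 8 * Real.cos θ ^ 4 - 8 * Real.cos θ ^ 2 + 1 := by
      have h4 : (4 : ℝ) * θ = 2 * (2 * θ) := by ring
      rw [h4, Real.cos_two_mul, Real.cos_two_mul]; ring
    have := hf θ
    rw [hθ, hcos4] at this
    simp only [IsRoot, hp]
    simp only [eval_add, eval_mul, eval_C, eval_pow, eval_X]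
    linarith
  have hroots : {x : ℝ | p.IsRoot x} = ↑p.roots.toFinset := by
    ext x
    simp [Polynomial.mem_roots', hpne]
  set S := {θ ∈ Set.Icc 0 π | f θ = 0} with hS
  have hinj : Set.InjOn Real.cos S := by
    intro x hx y hy hxy
    exact Real.injOn_cos hx.1 hy.1 hxy
  calc S.encard = (Real.cos '' S).encard := (Set.InjOn.encard_image hinj).symm
    _ ≤ ({x : ℝ | p.IsRoot x}).encard := by
        apply Set.encard_le_encard
        rintro _ ⟨θ, hθ, rfl⟩
        exact key θ hθ.2
    _ = (p.roots.toFinset : Set ℝ).encard := by rw [hroots]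
    _ = (p.roots.toFinset.card : ℕ∞) := Set.encard_coe_eq_coe_finsetCard _
    _ ≤ (p.roots.card : ℕ∞) := by exact_mod_cast Multiset.toFinset_card_le _
    _ ≤ (p.natDegree : ℕ∞) := by exact_mod_cast Polynomial.card_roots' p
    _ = 4 := by rw [hdeg]; rfl
end

section
/- If f(θ) < 0 for all θ ∈ [0, π], then P has exactly two distinct real roots: exactly one in (u, ∞) and exactly one in (−∞, −u), and none in [−u, u]. In particular, this conclusion holds whenever b < −(|a| + 1). -/
open Real Set Filter

/-!
The substitution `t = u cos θ` turns `P` on `[-u, u]` into `(u⁴/8) f(θ)`, because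
`cos 4θ = 8 cos⁴ θ - 8 cos² θ + 1`; hence `P < 0` on `[-u, u]`. For `|t| > u` we have
`P''(t) = 12 t² + 2m > 0`, and a strictly convex function that is negative at `u` and tends to
`+∞` has exactly one zero in `(u, ∞)`. The interval `(-∞, -u)` is handled through `t ↦ P(-t)`,
which is a quartic of the same shape.
-/

lemma existsUnique_zero_Ioi_of_strictConvexOn {f : ℝ → ℝ} {a : ℝ}
    (hconv : StrictConvexOn ℝ (Ici a) f) (hcont : ContinuousOn f (Ici a)) (ha : f a < 0)
    (htop : Tendsto f atTop atTop) : ∃! x, x ∈ Ioi a ∧ f x = 0 := by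
  obtain ⟨b, hfb, hab⟩ := ((htop.eventually_gt_atTop 0).and (eventually_gt_atTop a)).exists
  obtain ⟨x, hx, hfx⟩ : ∃ x ∈ Ioo a b, f x = 0 :=
    intermediate_value_Ioo hab.le (hcont.mono Icc_subset_Ici_self) ⟨ha, hfb⟩
  have neg_of_lt {s t : ℝ} (hs : a < s) (hst : s < t) (hft : f t = 0) : f s < 0 := by
    have hlt := hconv.lt_on_openSegment self_mem_Ici (mem_Ici.2 (hs.trans hst).le)
      (hs.trans hst).ne (by rw [openSegment_eq_Ioo (hs.trans hst)]; exact ⟨hs, hst⟩)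
    rwa [hft, max_eq_right ha.le] at hlt
  refine ⟨x, ⟨hx.1, hfx⟩, fun y ⟨hy, hfy⟩ => ?_⟩
  rcases lt_trichotomy y x with h | h | h
  · exact absurd hfy (neg_of_lt hy h hfx).ne
  · exact h
  · exact absurd hfx (neg_of_lt hx.1 h hfy).ne

lemma encard_zeros_eq_two {f : ℝ → ℝ} {u : ℝ} (hu : 0 ≤ u)
    (hright : ∃! t, t ∈ Ioi u ∧ f t = 0) (hleft : ∃! t, t ∈ Iio (-u) ∧ f t = 0)
    (hmid : ∀ t ∈ Icc (-u) u, f t ≠ 0) : {t | f t = 0}.encard = 2 := by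
  obtain ⟨r, ⟨hr, hfr⟩, hr_uniq⟩ := hright
  obtain ⟨l, ⟨hl, hfl⟩, hl_uniq⟩ := hleft
  have hzeros : {t | f t = 0} = {l, r} := by
    ext t
    refine ⟨fun (ht : f t = 0) => ?_, ?_⟩
    · rcases lt_or_ge t (-u) with htl | htl
      · exact Or.inl (hl_uniq t ⟨htl, ht⟩)
      rcases le_or_gt t u with htr | htr
      · exact absurd ht (hmid t ⟨htl, htr⟩)
      · exact Or.inr (hr_uniq t ⟨htr, ht⟩)
    · rintro (rfl | rfl) <;> assumption
  rw [hzeros, encard_pair]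
  linarith [mem_Ioi.1 hr, mem_Iio.1 hl]

noncomputable def depressedQuartic (m p q t : ℝ) : ℝ := t ^ 4 + m * t ^ 2 + p * t + q

namespace depressedQuartic

variable (m p q : ℝ)

lemma apply_neg (t : ℝ) : depressedQuartic m p q (-t) = depressedQuartic m (-p) q t := by
  unfold depressedQuartic; ring

lemma continuous : Continuous (depressedQuartic m p q) := by
  unfold depressedQuartic; fun_prop

open Polynomial in
lemma tendsto_atTop : Tendsto (depressedQuartic m p q) atTop atTop := by
  have hP : depressedQuartic m p q = fun t => (X ^ 4 + C m * X ^ 2 + C p * X + C q).eval t := by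
    ext t; simp [depressedQuartic]
  have hdeg : (X ^ 4 + C m * X ^ 2 + C p * X + C q).natDegree = 4 := by compute_degree!
  have hmonic : (X ^ 4 + C m * X ^ 2 + C p * X + C q).Monic := by monicity!
  rw [hP]
  apply Polynomial.tendsto_atTop_of_leadingCoeff_nonneg
  · rw [degree_eq_natDegree hmonic.ne_zero, hdeg]; norm_num
  · rw [hmonic.leadingCoeff]; exact zero_le_one

lemma hasDerivAt (t : ℝ) :
    HasDerivAt (depressedQuartic m p q) (4 * t ^ 3 + 2 * m * t + p) t :=
  ((((hasDerivAt_pow 4 t).add ((hasDerivAt_pow 2 t).const_mul m)).add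
    ((hasDerivAt_id t).const_mul p)).add_const q).congr_deriv (by push_cast; ring)

lemma iterate_deriv_two (t : ℝ) :
    deriv^[2] (depressedQuartic m p q) t = 12 * t ^ 2 + 2 * m := by
  have hderiv : deriv (depressedQuartic m p q) = fun t => 4 * t ^ 3 + 2 * m * t + p :=
    funext fun t => (hasDerivAt m p q t).deriv
  rw [Function.iterate_succ_apply, Function.iterate_one, hderiv]
  exact ((((hasDerivAt_pow 3 t).const_mul 4).add ((hasDerivAt_id t).const_mul (2 * m))).add_const
    p).deriv.trans (by push_cast; ring)

lemma strictConvexOn_Ici {u : ℝ} (hu : 0 ≤ u) (hmu : -m ≤ 6 * u ^ 2) :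
    StrictConvexOn ℝ (Ici u) (depressedQuartic m p q) := by
  refine strictConvexOn_of_deriv2_pos (convex_Ici u) (continuous m p q).continuousOn fun t ht => ?_
  rw [interior_Ici, mem_Ioi] at ht
  rw [iterate_deriv_two]
  nlinarith

lemma existsUnique_eq_zero_Ioi {u : ℝ} (hu : 0 ≤ u) (hmu : -m ≤ 6 * u ^ 2)
    (hneg : depressedQuartic m p q u < 0) : ∃! t, t ∈ Ioi u ∧ depressedQuartic m p q t = 0 :=
  existsUnique_zero_Ioi_of_strictConvexOn (strictConvexOn_Ici m p q hu hmu)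
    (continuous m p q).continuousOn hneg (tendsto_atTop m p q)

lemma existsUnique_eq_zero_Iio {u : ℝ} (hu : 0 ≤ u) (hmu : -m ≤ 6 * u ^ 2)
    (hneg : depressedQuartic m p q (-u) < 0) :
    ∃! t, t ∈ Iio (-u) ∧ depressedQuartic m p q t = 0 := by
  rw [apply_neg] at hneg
  obtain ⟨s, ⟨hs, hzero⟩, huniq⟩ := existsUnique_eq_zero_Ioi m (-p) q hu hmu hneg
  refine ⟨-s, ⟨mem_Iio.2 (neg_lt_neg hs), by rwa [apply_neg]⟩, fun t ⟨ht, htzero⟩ => ?_⟩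
  rw [← huniq (-t) ⟨mem_Ioi.2 (lt_neg_of_lt_neg ht), by rwa [← apply_neg, neg_neg]⟩, neg_neg]

lemma two_roots_of_neg_on_Icc {u : ℝ} (hu : 0 ≤ u) (hmu : -m ≤ 6 * u ^ 2)
    (hneg : ∀ t ∈ Icc (-u) u, depressedQuartic m p q t < 0) :
    {t | depressedQuartic m p q t = 0}.encard = 2 ∧
      (∃! t, t ∈ Ioi u ∧ depressedQuartic m p q t = 0) ∧
      (∃! t, t ∈ Iio (-u) ∧ depressedQuartic m p q t = 0) ∧
      ∀ t ∈ Icc (-u) u, depressedQuartic m p q t ≠ 0 := by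
  have hright := existsUnique_eq_zero_Ioi m p q hu hmu (hneg u ⟨by linarith, le_rfl⟩)
  have hleft := existsUnique_eq_zero_Iio m p q hu hmu (hneg (-u) ⟨le_rfl, by linarith⟩)
  have hmid : ∀ t ∈ Icc (-u) u, depressedQuartic m p q t ≠ 0 := fun t ht => (hneg t ht).ne
  exact ⟨encard_zeros_eq_two hu hright hleft hmid, hright, hleft, hmid⟩

end depressedQuartic

lemma depressedQuartic_mul_cos (u a b θ : ℝ) :
    depressedQuartic (-u ^ 2) (a * u ^ 3 / 8) ((b + 1) * u ^ 4 / 8) (u * cos θ) =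
      u ^ 4 / 8 * (a * cos θ + cos (4 * θ) + b) := by
  have hcos4 : cos (4 * θ) = 2 * (2 * cos θ ^ 2 - 1) ^ 2 - 1 := by
    rw [show 4 * θ = 2 * (2 * θ) by ring, cos_two_mul, cos_two_mul]
  rw [depressedQuartic, hcos4]
  ring

lemma depressedQuartic_neg_on_Icc {u a b : ℝ} (hu : 0 < u)
    (hneg : ∀ θ ∈ Icc 0 π, a * cos θ + cos (4 * θ) + b < 0) :
    ∀ t ∈ Icc (-u) u, depressedQuartic (-u ^ 2) (a * u ^ 3 / 8) ((b + 1) * u ^ 4 / 8) t < 0 := by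
  rintro t ⟨hlow, hup⟩
  have hcos : u * cos (arccos (t / u)) = t := by
    rw [cos_arccos (by rwa [le_div_iff₀ hu, neg_one_mul]) (by rwa [div_le_one hu]),
      mul_div_cancel₀ t hu.ne']
  rw [← hcos, depressedQuartic_mul_cos]
  exact mul_neg_of_pos_of_neg (by positivity) (hneg _ ⟨arccos_nonneg _, arccos_le_pi _⟩)

theorem stmt_14 (m p q : ℝ) (hm : m < 0)
    (u a b : ℝ) (P f : ℝ → ℝ)
    (hu : u = Real.sqrt (-m))
    (ha : a = 8 * p / (-m) ^ ((3 : ℝ) / 2))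
    (hb : b = 8 * q / m ^ 2 - 1)
    (hP : ∀ t, P t = t ^ 4 + m * t ^ 2 + p * t + q)
    (hf : ∀ θ, f θ = a * Real.cos θ + Real.cos (4 * θ) + b) :
    ((∀ θ ∈ Set.Icc 0 π, f θ < 0) →
      {t : ℝ | P t = 0}.encard = 2 ∧
      (∃! t : ℝ, t ∈ Set.Ioi u ∧ P t = 0) ∧
      (∃! t : ℝ, t ∈ Set.Iio (-u) ∧ P t = 0) ∧
      (∀ t ∈ Set.Icc (-u) u, P t ≠ 0)) ∧
    (b < -(|a| + 1) →
      {t : ℝ | P t = 0}.encard = 2 ∧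
      (∃! t : ℝ, t ∈ Set.Ioi u ∧ P t = 0) ∧
      (∃! t : ℝ, t ∈ Set.Iio (-u) ∧ P t = 0) ∧
      (∀ t ∈ Set.Icc (-u) u, P t ≠ 0)) := by
  have hu_pos : 0 < u := hu ▸ sqrt_pos.2 (neg_pos.2 hm)
  have hm_eq : m = -u ^ 2 := by rw [hu, sq_sqrt (neg_nonneg.2 hm.le), neg_neg]
  have hu_cube : (-m) ^ ((3 : ℝ) / 2) = u ^ 3 := by
    rw [rpow_div_two_eq_sqrt _ (neg_nonneg.2 hm.le), ← hu]; norm_cast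
  have hp_eq : p = a * u ^ 3 / 8 := by rw [ha, hu_cube]; field_simp
  have hq_eq : q = (b + 1) * u ^ 4 / 8 := by rw [hb, hm_eq]; field_simp; ring
  obtain rfl : P = depressedQuartic (-u ^ 2) (a * u ^ 3 / 8) ((b + 1) * u ^ 4 / 8) := by
    ext t; rw [hP, depressedQuartic, hm_eq, hp_eq, hq_eq]
  have hroots (hneg : ∀ θ ∈ Icc 0 π, a * cos θ + cos (4 * θ) + b < 0) :=
    depressedQuartic.two_roots_of_neg_on_Icc _ _ _ hu_pos.le (by linarith [sq_nonneg u])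
      (depressedQuartic_neg_on_Icc hu_pos hneg)
  refine ⟨fun hneg => hroots fun θ hθ => hf θ ▸ hneg θ hθ, fun hab => hroots fun θ _ => ?_⟩
  have hcos : a * cos θ ≤ |a| := (le_abs_self _).trans (by
    rw [abs_mul]; exact mul_le_of_le_one_right (abs_nonneg a) (abs_cos_le_one θ))
  linarith [cos_le_one (4 * θ)]
end

section
/- If f has exactly two zeros in [0, π] and f(0) ≥ 0 and f(π) ≥ 0, then P has exactly two distinct real roots, and both lie in [−u, u]. -/
/-!
With `c = cos θ`, Chebyshev's identity `cos 4θ = 8c⁴ - 8c² + 1` makes `f θ` a quartic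
`Q = cosQuartic a b` in `cos θ`, and the substitution `t = u c` makes `P` a positive multiple
of the same `Q`. Two distinct roots `c₁, c₂ ∈ [-1, 1]` of `Q` give
`a = -8 (c₁ + c₂)(c₁² + c₂² - 1)`, hence `|a| < 16`; then `Q c - Q 1 = (c - 1)(8c²(c + 1) + a)`
is positive for `c > 1`, and symmetrically for `c < -1`, so with `Q (±1) ≥ 0` all real roots
of `Q` lie in `[-1, 1]`. There `cos` is a bijection from `[0, π]`, so `Q` has exactly two real
roots, and `P` has their multiples by `u`.
-/

open Real Set

def cosQuartic (a b c : ℝ) : ℝ := 8 * c ^ 4 - 8 * c ^ 2 + a * c + (b + 1)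

lemma cos_four_mul (θ : ℝ) : cos (4 * θ) = 8 * cos θ ^ 4 - 8 * cos θ ^ 2 + 1 := by
  rw [show 4 * θ = 2 * (2 * θ) by ring, cos_two_mul, cos_two_mul]
  ring

lemma cosQuartic_cos (a b θ : ℝ) : cosQuartic a b (cos θ) = a * cos θ + cos (4 * θ) + b := by
  rw [cos_four_mul, cosQuartic]
  ring

lemma cosQuartic_neg (a b c : ℝ) : cosQuartic (-a) b (-c) = cosQuartic a b c := by
  simp only [cosQuartic]
  ring

lemma lt_sixteen_of_cosQuartic_eq_zero {a b c₁ c₂ : ℝ} (hc₁ : c₁ ∈ Icc (-1) 1)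
    (hc₂ : c₂ ∈ Icc (-1) 1) (hne : c₁ ≠ c₂) (h₁ : cosQuartic a b c₁ = 0) (h₂ : cosQuartic a b c₂ = 0) : a < 16 := by
  obtain ⟨hl₁, hr₁⟩ := hc₁
  obtain ⟨hl₂, hr₂⟩ := hc₂
  have ha : a = -8 * (c₁ + c₂) * (c₁ ^ 2 + c₂ ^ 2 - 1) := by
    have : (c₁ - c₂) * (a + 8 * (c₁ + c₂) * (c₁ ^ 2 + c₂ ^ 2 - 1)) = 0 := by
      unfold cosQuartic at h₁ h₂
      linear_combination h₁ - h₂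
    linarith [(mul_eq_zero.mp this).resolve_left (sub_ne_zero.mpr hne)]
  have hsq : 0 < (c₁ - c₂) ^ 2 := by positivity [sub_ne_zero.mpr hne]
  nlinarith [mul_nonneg (sub_nonneg.2 hr₁) (sub_nonneg.2 hr₂),
    mul_nonneg (neg_le_iff_add_nonneg.1 hl₁) (neg_le_iff_add_nonneg.1 hl₂),
    sq_nonneg (c₁ + c₂), sq_nonneg (c₁ - c₂)]

lemma abs_lt_sixteen_of_cosQuartic_eq_zero {a b c₁ c₂ : ℝ} (hc₁ : c₁ ∈ Icc (-1) 1)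
    (hc₂ : c₂ ∈ Icc (-1) 1) (hne : c₁ ≠ c₂) (h₁ : cosQuartic a b c₁ = 0)
    (h₂ : cosQuartic a b c₂ = 0) : |a| < 16 := by
  have hneg : ∀ {c : ℝ}, c ∈ Icc (-1) 1 → -c ∈ Icc (-1) 1 := fun ⟨hl, hr⟩ =>
    ⟨by linarith, by linarith⟩
  refine abs_lt.mpr ⟨?_, lt_sixteen_of_cosQuartic_eq_zero hc₁ hc₂ hne h₁ h₂⟩
  have := lt_sixteen_of_cosQuartic_eq_zero (a := -a) (b := b) (hneg hc₁) (hneg hc₂)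
    (neg_injective.ne hne) (by rwa [cosQuartic_neg]) (by rwa [cosQuartic_neg])
  linarith

lemma cosQuartic_pos_of_one_lt {a b c : ℝ} (ha : -16 < a) (h₁ : 0 ≤ cosQuartic a b 1) (hc : 1 < c) :
    0 < cosQuartic a b c := by
  have hgrowth : 0 < 8 * c ^ 2 * (c + 1) + a := by nlinarith
  have : cosQuartic a b c = cosQuartic a b 1 + (c - 1) * (8 * c ^ 2 * (c + 1) + a) := by
    simp only [cosQuartic]
    ring
  rw [this]
  linarith [mul_pos (sub_pos.2 hc) hgrowth]

lemma mem_Icc_of_cosQuartic_eq_zero {a b c : ℝ} (ha : |a| < 16) (h₁ : 0 ≤ cosQuartic a b 1)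
    (hm₁ : 0 ≤ cosQuartic a b (-1)) (hc : cosQuartic a b c = 0) : c ∈ Icc (-1) 1 := by
  obtain ⟨ha₁, ha₂⟩ := abs_lt.mp ha
  refine ⟨?_, ?_⟩
  · by_contra! hlt
    have := cosQuartic_pos_of_one_lt (a := -a) (b := b) (c := -c) (by linarith)
      (by rwa [← neg_neg (1 : ℝ), cosQuartic_neg]) (by linarith)
    rw [cosQuartic_neg] at this
    linarith
  · by_contra! hlt
    linarith [cosQuartic_pos_of_one_lt ha₁ h₁ hlt]

lemma encard_setOf_cos_eq_zero (g : ℝ → ℝ) :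
    {θ ∈ Icc 0 π | g (cos θ) = 0}.encard = {c ∈ Icc (-1) 1 | g c = 0}.encard := by
  rw [← injOn_cos.mono (sep_subset _ _) |>.encard_image]
  congr 1
  ext c
  constructor
  · rintro ⟨θ, ⟨hθ, hg⟩, rfl⟩
    exact ⟨⟨neg_one_le_cos θ, cos_le_one θ⟩, hg⟩
  · rintro ⟨hc, hg⟩
    refine ⟨arccos c, ⟨⟨arccos_nonneg c, arccos_le_pi c⟩, ?_⟩, cos_arccos hc.1 hc.2⟩
    rwa [cos_arccos hc.1 hc.2]

lemma encard_setOf_div_eq_zero (g : ℝ → ℝ) {u : ℝ} (hu : u ≠ 0) :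
    {t | g (t / u) = 0}.encard = {c | g c = 0}.encard :=
  encard_preimage_of_bijective (Equiv.divRight₀ u hu).bijective {c | g c = 0}

lemma quartic_eq_mul_cosQuartic {m : ℝ} (hm : m < 0) (p q t : ℝ) :
    t ^ 4 + m * t ^ 2 + p * t + q = √(-m) ^ 4 / 8 *
      cosQuartic (8 * p / (-m) ^ ((3 : ℝ) / 2)) (8 * q / m ^ 2 - 1) (t / √(-m)) := by
  have hm' : 0 < -m := neg_pos.mpr hm
  have hu : √(-m) ≠ 0 := (sqrt_pos.mpr hm').ne'
  have h₃ : (-m) ^ ((3 : ℝ) / 2) = √(-m) ^ 3 := by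
    rw [sqrt_eq_rpow, ← rpow_natCast, ← rpow_mul hm'.le]
    norm_num
  have h₂ : m = -√(-m) ^ 2 := by rw [sq_sqrt hm'.le, neg_neg]
  rw [h₃]
  generalize √(-m) = u at hu h₂
  subst h₂
  rw [cosQuartic]
  field_simp
  ring

theorem stmt_15 (m p q : ℝ) (hm : m < 0)
    (u a b : ℝ) (P f : ℝ → ℝ)
    (hu : u = Real.sqrt (-m))
    (ha : a = 8 * p / (-m) ^ ((3 : ℝ) / 2))
    (hb : b = 8 * q / m ^ 2 - 1)
    (hP : ∀ t, P t = t ^ 4 + m * t ^ 2 + p * t + q)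
    (hf : ∀ θ, f θ = a * Real.cos θ + Real.cos (4 * θ) + b)
    (h2 : {θ ∈ Set.Icc 0 π | f θ = 0}.encard = 2)
    (h0 : f 0 ≥ 0) (hπ : f π ≥ 0) :
    {t : ℝ | P t = 0}.encard = 2 ∧ ∀ t : ℝ, P t = 0 → t ∈ Set.Icc (-u) u := by
  have hu₀ : 0 < u := hu ▸ sqrt_pos.mpr (neg_pos.mpr hm)
  have hPzero : ∀ t, P t = 0 ↔ cosQuartic a b (t / u) = 0 := fun t => by
    simp [hP, quartic_eq_mul_cosQuartic hm, ← hu, ← ha, ← hb, hu₀.ne']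
  have hfQ : ∀ θ, f θ = cosQuartic a b (cos θ) := fun θ => by rw [hf, cosQuartic_cos]
  have hzeros : {c ∈ Icc (-1) 1 | cosQuartic a b c = 0}.encard = 2 := by
    rw [← encard_setOf_cos_eq_zero]
    simpa only [hfQ] using h2
  obtain ⟨c₁, c₂, hne, hc⟩ := encard_eq_two.mp hzeros
  have h₁ : c₁ ∈ {c ∈ Icc (-1) 1 | cosQuartic a b c = 0} := hc ▸ mem_insert _ _
  have h₂ : c₂ ∈ {c ∈ Icc (-1) 1 | cosQuartic a b c = 0} := hc ▸ mem_insert_of_mem _ rfl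
  have hIcc : ∀ c, cosQuartic a b c = 0 → c ∈ Icc (-1) 1 := fun c =>
    mem_Icc_of_cosQuartic_eq_zero (abs_lt_sixteen_of_cosQuartic_eq_zero h₁.1 h₂.1 hne h₁.2 h₂.2)
      (by simpa [hfQ] using h0) (by simpa [hfQ] using hπ)
  refine ⟨?_, fun t ht => ?_⟩
  · rw [show {t | P t = 0} = {t | cosQuartic a b (t / u) = 0} from ext hPzero,
      encard_setOf_div_eq_zero _ hu₀.ne', ← hzeros]
    exact congrArg encard (ext fun c => ⟨fun h => ⟨hIcc c h, h⟩, And.right⟩)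
  · obtain ⟨hl, hr⟩ := hIcc _ ((hPzero t).mp ht)
    exact ⟨by linarith [(le_div_iff₀ hu₀).mp hl], (div_le_one hu₀).mp hr⟩
end

section
/- If f has exactly one zero in [0, π] and exactly one of the two inequalities f(0) < 0, f(π) < 0 holds, then P has exactly two distinct real roots. -/
set_option maxHeartbeats 1000000

open Real

theorem keyquartic (u p q : ℝ) (hu : 0 < u) (P : ℝ → ℝ)
    (hP : ∀ t, P t = t ^ 4 - u ^ 2 * t ^ 2 + p * t + q)
    (h1 : {t ∈ Set.Icc (-u) u | P t = 0}.encard = 1)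
    (hPu : P u < 0) :
    {t : ℝ | P t = 0}.encard = 2 := by
  obtain ⟨A, hA⟩ := Set.encard_eq_one.mp h1
  have hAmem : A ∈ Set.Icc (-u) u ∧ P A = 0 := by
    have : A ∈ {t ∈ Set.Icc (-u) u | P t = 0} := by rw [hA]; rfl
    exact this
  have uniq : ∀ t, t ∈ Set.Icc (-u) u → P t = 0 → t = A := by
    intro t ht h0
    have : t ∈ {t ∈ Set.Icc (-u) u | P t = 0} := ⟨ht, h0⟩
    rw [hA] at this; exact this
  have hAlow : -u ≤ A := hAmem.1.1
  have hAup : A < u := by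
    rcases lt_or_eq_of_le hAmem.1.2 with h | h
    · exact h
    · exfalso; rw [h] at hAmem; linarith [hAmem.2]
  have hc : Continuous P := by
    have hPe : P = fun t => t ^ 4 - u ^ 2 * t ^ 2 + p * t + q := funext hP
    rw [hPe]
    fun_prop
  set M : ℝ := 1 + u + |p| + |q| with hM
  have hpabs := abs_nonneg p
  have hqabs := abs_nonneg q
  have hple := le_abs_self p
  have hpge := neg_abs_le p
  have hqle := le_abs_self q
  have hqge := neg_abs_le q
  have huM : u < M := by rw [hM]; linarith
  have hM0 : 0 < M := lt_trans hu huM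
  have h1M : (1:ℝ) ≤ M := by rw [hM]; linarith
  have hPM : 0 < P M := by
    rw [hP]
    have hPMeq : M ^ 4 - u ^ 2 * M ^ 2 + p * M + q
        = M ^ 2 * (M + u) * (1 + |p| + |q|) + p * M + q := by
      rw [hM]; ring
    rw [hPMeq]
    have h4 : -|p| * M ≤ p * M := by nlinarith
    have h5 : -|q| * M ≤ q := by nlinarith
    have h3 : M ≤ M ^ 2 * (M + u) := by nlinarith
    have h6 : M * (1 + |p| + |q|) ≤ (M ^ 2 * (M + u)) * (1 + |p| + |q|) := by
      apply mul_le_mul_of_nonneg_right h3; positivity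
    nlinarith [h4, h5, h6]
  obtain ⟨B, hBmem, hBroot⟩ : ∃ B ∈ Set.Ioo u M, P B = 0 := by
    have hiv := intermediate_value_Ioo (le_of_lt huM) hc.continuousOn
    have h0 : (0:ℝ) ∈ Set.Ioo (P u) (P M) := ⟨hPu, hPM⟩
    obtain ⟨B, hB1, hB2⟩ := hiv h0
    exact ⟨B, hB1, hB2⟩
  have hBu : u < B := hBmem.1
  have hBA : A ≠ B := by intro h; rw [h] at hAup; linarith
  have hsub : ∀ C, P C = 0 → C = A ∨ C = B := by
    intro C hC
    by_contra hcon
    push_neg at hcon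
    obtain ⟨hCA, hCB⟩ := hcon
    have hCicc : C ∉ Set.Icc (-u) u := fun h => hCA (uniq C h hC)
    rw [Set.mem_Icc] at hCicc
    push_neg at hCicc
    have hCout : C < -u ∨ u < C := by
      by_cases h : -u ≤ C
      · right; exact hCicc h
      · left; linarith
    have eA : A ^ 4 - u ^ 2 * A ^ 2 + p * A + q = 0 := by rw [← hP]; exact hAmem.2
    have eB : B ^ 4 - u ^ 2 * B ^ 2 + p * B + q = 0 := by rw [← hP]; exact hBroot
    have eC : C ^ 4 - u ^ 2 * C ^ 2 + p * C + q = 0 := by rw [← hP]; exact hC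
    have hABne : A - B ≠ 0 := sub_ne_zero.mpr hBA
    have hBCne : B - C ≠ 0 := sub_ne_zero.mpr (fun h => hCB h.symm)
    have hCAne : C - A ≠ 0 := sub_ne_zero.mpr hCA
    have hu2 : u ^ 2 = A ^ 2 + B ^ 2 + C ^ 2 + A * B + A * C + B * C := by
      have h0 : (u ^ 2 - (A ^ 2 + B ^ 2 + C ^ 2 + A * B + A * C + B * C)) *
          ((A - B) * (B - C) * (C - A)) = 0 := by
        linear_combination (B - C) * eA + (C - A) * eB + (A - B) * eC
      have hne : (A - B) * (B - C) * (C - A) ≠ 0 :=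
        mul_ne_zero (mul_ne_zero hABne hBCne) hCAne
      have := (mul_eq_zero.mp h0).resolve_right hne
      linarith [sub_eq_zero.mp this]
    have hpe : p = u ^ 2 * (A + B) - (A ^ 3 + A ^ 2 * B + A * B ^ 2 + B ^ 3) := by
      have h0 : (p - (u ^ 2 * (A + B) - (A ^ 3 + A ^ 2 * B + A * B ^ 2 + B ^ 3)))
          * (A - B) = 0 := by
        linear_combination eA - eB
      have := (mul_eq_zero.mp h0).resolve_right hABne
      linarith [sub_eq_zero.mp this]
    have hqe : q = u ^ 2 * A ^ 2 - A ^ 4 - p * A := by linear_combination eA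
    have hfac : ∀ t, P t = (t - A) * (t - B) * (t - C) * (t + (A + B + C)) := by
      intro t
      rw [hP]
      linear_combination hqe + (t - A) * hpe + (-t ^ 2 + (A + B) * t - A * B) * hu2
    have hPu' : (u - A) * (u - B) * (u - C) * (u + (A + B + C)) < 0 := by
      rw [← hfac]; exact hPu
    rcases hCout with hC1 | hC2
    · -- C < -u
      have hwpos : 0 < u + (A + B + C) := by
        by_contra hw; push_neg at hw
        have hx : 0 ≤ (u - B) * (u + (A + B + C)) := by
          nlinarith [mul_nonneg (show (0:ℝ) ≤ B - u by linarith)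
            (show (0:ℝ) ≤ -(u + (A + B + C)) by linarith)]
        have hy : 0 < (u - A) * (u - C) :=
          mul_pos (by linarith) (by linarith)
        nlinarith [hPu', mul_nonneg hy.le hx]
      have hge : u ≤ A + B + C := by
        by_contra hw'; push_neg at hw'
        have hwmem : -(A + B + C) ∈ Set.Icc (-u) u := ⟨by linarith, by linarith⟩
        have hwroot : P (-(A + B + C)) = 0 := by rw [hfac]; ring
        have hwA := uniq _ hwmem hwroot
        have hBC : B + C = -2 * A := by linarith
        have h9 : u * u < B * (-C) := by
          apply mul_lt_mul'' hBu (by linarith) hu.le hu.le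
        nlinarith [hu2, h9, sq_nonneg A]
      have hAB : 2 * u < A + B := by linarith
      nlinarith [hu2, sq_nonneg (B + C), sq_nonneg (A + C),
        mul_pos (show (0:ℝ) < A + B - 2 * u by linarith)
          (show (0:ℝ) < A + B + 2 * u by linarith)]
    · -- u < C
      have hq1 : 0 < (u - A) * ((u - B) * (u - C)) :=
        mul_pos (by linarith) (mul_pos_of_neg_of_neg (by linarith) (by linarith))
      have hwneg : u + (A + B + C) < 0 := by
        by_contra hw; push_neg at hw
        nlinarith [hPu', mul_nonneg hq1.le hw]
      linarith
  have hset : {t : ℝ | P t = 0} = {A, B} := by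
    ext t
    simp only [Set.mem_setOf_eq, Set.mem_insert_iff, Set.mem_singleton_iff]
    constructor
    · exact hsub t
    · rintro (rfl | rfl)
      · exact hAmem.2
      · exact hBroot
  rw [hset, Set.encard_pair hBA]

private lemma aux_mul_neg (c X : ℝ) (hc : 0 < c) : c * X < 0 ↔ X < 0 := by
  constructor
  · intro h
    by_contra h'
    push_neg at h'
    nlinarith [mul_nonneg hc.le h']
  · intro h
    exact mul_neg_of_pos_of_neg hc h

theorem stmt_16 (m p q : ℝ) (hm : m < 0)
    (u a b : ℝ) (P f : ℝ → ℝ)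
    (hu : u = Real.sqrt (-m))
    (ha : a = 8 * p / (-m) ^ ((3 : ℝ) / 2))
    (hb : b = 8 * q / m ^ 2 - 1)
    (hP : ∀ t, P t = t ^ 4 + m * t ^ 2 + p * t + q)
    (hf : ∀ θ, f θ = a * Real.cos θ + Real.cos (4 * θ) + b)
    (h1 : {θ ∈ Set.Icc 0 π | f θ = 0}.encard = 1)
    (hxor : Xor' (f 0 < 0) (f π < 0)) :
    {t : ℝ | P t = 0}.encard = 2 := by
  have hmpos : (0:ℝ) < -m := by linarith
  have hu0 : 0 < u := by rw [hu]; exact Real.sqrt_pos.mpr hmpos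
  have hune : u ≠ 0 := ne_of_gt hu0
  have hu2 : u ^ 2 = -m := by rw [hu]; exact Real.sq_sqrt hmpos.le
  have hm' : m = -u ^ 2 := by linarith
  have hu4 : (0:ℝ) < u ^ 4 := by positivity
  have h32 : (-m) ^ ((3:ℝ)/2) = u ^ 3 := by
    have h1' : (-m) ^ ((3:ℝ)/2) = ((-m) ^ ((1:ℝ)/2)) ^ (3:ℕ) := by
      rw [← Real.rpow_natCast ((-m) ^ ((1:ℝ)/2)) 3, ← Real.rpow_mul hmpos.le]
      norm_num
    rw [h1', ← Real.sqrt_eq_rpow, ← hu]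
  have hP' : ∀ t, P t = t ^ 4 - u ^ 2 * t ^ 2 + p * t + q := by
    intro t; rw [hP t, hm']; ring
  have hcos4 : ∀ θ : ℝ, Real.cos (4 * θ)
      = 8 * Real.cos θ ^ 4 - 8 * Real.cos θ ^ 2 + 1 := by
    intro θ
    rw [show (4:ℝ) * θ = 2 * (2 * θ) by ring, Real.cos_two_mul, Real.cos_two_mul]
    ring
  have hfP : ∀ θ, f θ = 8 * P (u * Real.cos θ) / u ^ 4 := by
    intro θ
    rw [hf θ, hP' (u * Real.cos θ), ha, hb, h32, hcos4 θ, hm']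
    field_simp
    ring
  -- translate h1
  have himg : (fun θ => u * Real.cos θ) '' {θ ∈ Set.Icc 0 π | f θ = 0}
      = {t ∈ Set.Icc (-u) u | P t = 0} := by
    ext t
    constructor
    · rintro ⟨θ, ⟨hθ, hfθ⟩, rfl⟩
      have hc1 := Real.neg_one_le_cos θ
      have hc2 := Real.cos_le_one θ
      have hmem : u * Real.cos θ ∈ Set.Icc (-u) u := ⟨by nlinarith, by nlinarith⟩
      have hthis := hfP θ
      rw [hfθ] at hthis
      have h8 : 8 * P (u * Real.cos θ) = 0 := by
        field_simp at hthis
        linarith [hthis]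
      exact ⟨hmem, by linarith⟩
    · rintro ⟨⟨ht1, ht2⟩, hPt⟩
      have hdiv1 : -1 ≤ t / u := by
        rw [le_div_iff₀ hu0]; nlinarith
      have hdiv2 : t / u ≤ 1 := by
        rw [div_le_one hu0]; exact ht2
      refine ⟨Real.arccos (t / u),
        ⟨⟨Real.arccos_nonneg _, Real.arccos_le_pi _⟩, ?_⟩, ?_⟩
      · have hcc : Real.cos (Real.arccos (t / u)) = t / u :=
          Real.cos_arccos hdiv1 hdiv2
        rw [hfP, hcc]
        rw [show u * (t / u) = t by field_simp]
        rw [hPt]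
        simp
      · have hcc : Real.cos (Real.arccos (t / u)) = t / u :=
          Real.cos_arccos hdiv1 hdiv2
        simp only [hcc]
        field_simp
  have hinj : Set.InjOn (fun θ => u * Real.cos θ) (Set.Icc 0 π) := by
    intro x hx y hy hxy
    exact Real.injOn_cos hx hy (mul_left_cancel₀ hune hxy)
  have hinj' : Set.InjOn (fun θ => u * Real.cos θ) {θ ∈ Set.Icc 0 π | f θ = 0} :=
    hinj.mono (Set.sep_subset _ _)
  have h1' : {t ∈ Set.Icc (-u) u | P t = 0}.encard = 1 := by
    rw [← himg, Set.InjOn.encard_image hinj', h1]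
  -- translate hxor
  have hf0 : f 0 = 8 * P u / u ^ 4 := by
    rw [hfP 0, Real.cos_zero, mul_one]
  have hfpi : f π = 8 * P (-u) / u ^ 4 := by
    rw [hfP π, Real.cos_pi]
    norm_num
  have hiff1 : f 0 < 0 ↔ P u < 0 := by
    rw [hf0, show 8 * P u / u ^ 4 = (8 / u ^ 4) * P u by ring]
    exact aux_mul_neg _ _ (by positivity)
  have hiff2 : f π < 0 ↔ P (-u) < 0 := by
    rw [hfpi, show 8 * P (-u) / u ^ 4 = (8 / u ^ 4) * P (-u) by ring]
    exact aux_mul_neg _ _ (by positivity)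
  rcases hxor with ⟨hx1, _⟩ | ⟨hx1, _⟩
  · exact keyquartic u p q hu0 P hP' h1' (hiff1.mp hx1)
  · -- P (-u) < 0 : apply to Q t = P (-t)
    have hPmu : P (-u) < 0 := hiff2.mp hx1
    set Q : ℝ → ℝ := fun t => P (-t) with hQdef
    have hQ : ∀ t, Q t = t ^ 4 - u ^ 2 * t ^ 2 + (-p) * t + q := by
      intro t
      rw [hQdef]
      simp only []
      rw [hP' (-t)]
      ring
    have hsetQ : {t ∈ Set.Icc (-u) u | Q t = 0}
        = Neg.neg '' {t ∈ Set.Icc (-u) u | P t = 0} := by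
      ext t
      constructor
      · rintro ⟨⟨h1t, h2t⟩, hQt⟩
        exact ⟨-t, ⟨⟨by linarith, by linarith⟩, hQt⟩, by ring⟩
      · rintro ⟨s, ⟨⟨h1s, h2s⟩, hPs⟩, rfl⟩
        refine ⟨⟨by linarith, by linarith⟩, ?_⟩
        show P (- -s) = 0
        rw [neg_neg]; exact hPs
    have h1Q : {t ∈ Set.Icc (-u) u | Q t = 0}.encard = 1 := by
      rw [hsetQ, (neg_injective.injOn).encard_image, h1']
    have hQu : Q u < 0 := hPmu
    have hres := keyquartic u (-p) q hu0 Q hQ h1Q hQu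
    have hsetQ2 : {t : ℝ | Q t = 0} = Neg.neg '' {t : ℝ | P t = 0} := by
      ext t
      constructor
      · intro ht
        exact ⟨-t, ht, by ring⟩
      · rintro ⟨s, hs, rfl⟩
        show P (- -s) = 0
        rw [neg_neg]; exact hs
    rw [hsetQ2, (neg_injective.injOn).encard_image] at hres
    exact hres
end

section
/- If f(0) ≥ 0, f(π) ≥ 0, and f has four zeros 0 ≤ θ₁ < θ₂ < θ₃ < θ₄ ≤ π in [0, π], then the set of real roots of P is exactly {u·cos θ₁, u·cos θ₂, u·cos θ₃, u·cos θ₄}, so P has four distinct real roots, all lying in [−u, u]. -/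
open Real

lemma aux_quartic (m p q r₁ r₂ r₃ r₄ t : ℝ)
    (h12 : r₁ ≠ r₂) (h13 : r₁ ≠ r₃) (h14 : r₁ ≠ r₄)
    (h23 : r₂ ≠ r₃) (h24 : r₂ ≠ r₄) (h34 : r₃ ≠ r₄)
    (e₁ : r₁^4 + m*r₁^2 + p*r₁ + q = 0)
    (e₂ : r₂^4 + m*r₂^2 + p*r₂ + q = 0)
    (e₃ : r₃^4 + m*r₃^2 + p*r₃ + q = 0)
    (e₄ : r₄^4 + m*r₄^2 + p*r₄ + q = 0)
    (et : t^4 + m*t^2 + p*t + q = 0) :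
    t = r₁ ∨ t = r₂ ∨ t = r₃ ∨ t = r₄ := by
  by_contra hc
  push_neg at hc
  obtain ⟨n1, n2, n3, n4⟩ := hc
  set Q : Polynomial ℝ := Polynomial.X^4 + Polynomial.C m * Polynomial.X^2
      + Polynomial.C p * Polynomial.X + Polynomial.C q with hQ
  have hdeg : Q.natDegree = 4 := by rw [hQ]; compute_degree!
  have heval : ∀ x : ℝ, Q.eval x = x^4 + m*x^2 + p*x + q := by
    intro x; simp [hQ]
  have hroot : ∀ x : ℝ, x^4 + m*x^2 + p*x + q = 0 → x ∈ Q.roots := by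
    intro x hx
    rw [Polynomial.mem_roots']
    exact ⟨by intro h; simp [h] at hdeg, by rwa [Polynomial.IsRoot, heval]⟩
  set s : Finset ℝ := {t, r₁, r₂, r₃, r₄} with hs
  have hcard : s.card = 5 := by
    rw [hs]
    rw [Finset.card_insert_of_notMem (by simp [n1, n2, n3, n4]),
        Finset.card_insert_of_notMem (by simp [h12, h13, h14]),
        Finset.card_insert_of_notMem (by simp [h23, h24]),
        Finset.card_insert_of_notMem (by simp [h34])]
    simp
  have hsub : s.val ⊆ Q.roots := by
    intro x hx
    have : x = t ∨ x = r₁ ∨ x = r₂ ∨ x = r₃ ∨ x = r₄ := by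
      simpa [hs, Finset.mem_insert] using hx
    rcases this with rfl|rfl|rfl|rfl|rfl
    · exact hroot _ et
    · exact hroot _ e₁
    · exact hroot _ e₂
    · exact hroot _ e₃
    · exact hroot _ e₄
  have := Polynomial.card_le_degree_of_subset_roots hsub
  omega

theorem stmt_17 (m p q : ℝ) (hm : m < 0)
    (u a b : ℝ) (P f : ℝ → ℝ)
    (hu : u = Real.sqrt (-m))
    (ha : a = 8 * p / (-m) ^ ((3 : ℝ) / 2))
    (hb : b = 8 * q / m ^ 2 - 1)
    (hP : ∀ t, P t = t ^ 4 + m * t ^ 2 + p * t + q)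
    (hf : ∀ θ, f θ = a * Real.cos θ + Real.cos (4 * θ) + b)
    (h0 : f 0 ≥ 0) (hπ : f π ≥ 0)
    (θ₁ θ₂ θ₃ θ₄ : ℝ)
    (hord : 0 ≤ θ₁ ∧ θ₁ < θ₂ ∧ θ₂ < θ₃ ∧ θ₃ < θ₄ ∧ θ₄ ≤ π)
    (hz₁ : f θ₁ = 0) (hz₂ : f θ₂ = 0) (hz₃ : f θ₃ = 0) (hz₄ : f θ₄ = 0) :
    {t : ℝ | P t = 0} =
      {u * Real.cos θ₁, u * Real.cos θ₂, u * Real.cos θ₃, u * Real.cos θ₄} ∧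
    {t : ℝ | P t = 0}.encard = 4 ∧
    {t : ℝ | P t = 0} ⊆ Set.Icc (-u) u := by
  obtain ⟨o1, o2, o3, o4, o5⟩ := hord
  have hu0 : 0 < u := by rw [hu]; exact Real.sqrt_pos.2 (by linarith)
  have hu2 : u ^ 2 = -m := by rw [hu]; exact Real.sq_sqrt (by linarith)
  have hm' : m = -u^2 := by linarith
  have hm3 : (-m) ^ ((3 : ℝ) / 2) = u ^ 3 := by
    rw [hu, show ((3:ℝ)/2) = (1/2 : ℝ) * (3:ℕ) by norm_num,
        Real.rpow_mul (by linarith), Real.rpow_natCast, ← Real.sqrt_eq_rpow]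
  have hmne : m ≠ 0 := ne_of_lt hm
  -- key transfer: zero of f gives root of P
  have hkey : ∀ θ : ℝ, f θ = 0 →
      (u * Real.cos θ)^4 + m * (u * Real.cos θ)^2 + p * (u * Real.cos θ) + q = 0 := by
    intro θ hθ
    rw [hf] at hθ
    have hc4 : Real.cos (4 * θ) = 2 * (2 * Real.cos θ ^ 2 - 1) ^ 2 - 1 := by
      rw [show (4:ℝ) * θ = 2 * (2 * θ) by ring, Real.cos_two_mul, Real.cos_two_mul]
    rw [hc4, ha, hb, hm3] at hθ
    field_simp at hθ
    rw [hm'] at hθ ⊢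
    have h8 : 8 * u^3 * ((u * Real.cos θ)^4 + (-u^2) * (u * Real.cos θ)^2
        + p * (u * Real.cos θ) + q) = 0 := by linear_combination hθ
    have hne : (8:ℝ) * u^3 ≠ 0 := by positivity
    exact (mul_eq_zero.1 h8).resolve_left hne
  -- cosines are strictly decreasing
  have hmem : ∀ θ : ℝ, θ₁ ≤ θ → θ ≤ θ₄ → θ ∈ Set.Icc 0 π := fun θ hθ hθ' =>
    ⟨by linarith, by linarith⟩
  have hc12 : Real.cos θ₂ < Real.cos θ₁ :=
    Real.strictAntiOn_cos (hmem θ₁ le_rfl (by linarith)) (hmem θ₂ o2.le (by linarith)) o2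
  have hc23 : Real.cos θ₃ < Real.cos θ₂ :=
    Real.strictAntiOn_cos (hmem θ₂ o2.le (by linarith)) (hmem θ₃ (by linarith) o4.le) o3
  have hc34 : Real.cos θ₄ < Real.cos θ₃ :=
    Real.strictAntiOn_cos (hmem θ₃ (by linarith) o4.le) (hmem θ₄ (by linarith) le_rfl) o4
  set r₁ := u * Real.cos θ₁
  set r₂ := u * Real.cos θ₂
  set r₃ := u * Real.cos θ₃
  set r₄ := u * Real.cos θ₄
  have hr12 : r₂ < r₁ := mul_lt_mul_of_pos_left hc12 hu0
  have hr23 : r₃ < r₂ := mul_lt_mul_of_pos_left hc23 hu0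
  have hr34 : r₄ < r₃ := mul_lt_mul_of_pos_left hc34 hu0
  have n12 : r₁ ≠ r₂ := ne_of_gt hr12
  have n13 : r₁ ≠ r₃ := ne_of_gt (by linarith)
  have n14 : r₁ ≠ r₄ := ne_of_gt (by linarith)
  have n23 : r₂ ≠ r₃ := ne_of_gt hr23
  have n24 : r₂ ≠ r₄ := ne_of_gt (by linarith)
  have n34 : r₃ ≠ r₄ := ne_of_gt hr34
  have e₁ := hkey θ₁ hz₁
  have e₂ := hkey θ₂ hz₂
  have e₃ := hkey θ₃ hz₃
  have e₄ := hkey θ₄ hz₄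
  have hset : {t : ℝ | P t = 0} = {r₁, r₂, r₃, r₄} := by
    ext t
    simp only [Set.mem_setOf_eq, Set.mem_insert_iff, Set.mem_singleton_iff, hP]
    constructor
    · intro ht
      exact aux_quartic m p q r₁ r₂ r₃ r₄ t n12 n13 n14 n23 n24 n34 e₁ e₂ e₃ e₄ ht
    · rintro (rfl|rfl|rfl|rfl)
      · exact e₁
      · exact e₂
      · exact e₃
      · exact e₄
  refine ⟨hset, ?_, ?_⟩
  · rw [hset]
    rw [Set.encard_insert_of_notMem (by simp [n12, n13, n14]),
        Set.encard_insert_of_notMem (by simp [n23, n24]),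
        Set.encard_pair n34]
    rfl
  · rw [hset]
    have hb : ∀ θ : ℝ, u * Real.cos θ ∈ Set.Icc (-u) u := by
      intro θ
      have h1 := mul_le_mul_of_nonneg_left (Real.neg_one_le_cos θ) hu0.le
      have h2 := mul_le_mul_of_nonneg_left (Real.cos_le_one θ) hu0.le
      constructor
      · linarith
      · linarith
    intro t ht
    simp only [Set.mem_insert_iff, Set.mem_singleton_iff] at ht
    rcases ht with rfl|rfl|rfl|rfl
    · exact hb θ₁
    · exact hb θ₂
    · exact hb θ₃
    · exact hb θ₄
end
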